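/- In the triangular setting, the matrix R(t) := −∫_t^∞ X(t,τ)(I−P^A(τ))C(τ)P^B(τ)Y(τ,t)dτ − ∫_0^t X(t,τ)P^A(τ)C(τ)(I−P^B(τ))Y(τ,t)dτ satisfies ‖R(t)‖ ≤ (2κκ̃/(α + α̃)) L e^{θt} ‖C‖_{τ,∞} for every t ≥ 0. -/

import Mathlib

open MeasureTheory Filter

noncomputable section

/-- `T` is the evolution operator of the linear system `x' = A(t) x`. -/
def IsEvolution {E : Type*} [NormedAddCommGroup E] [NormedSpace ℝ E]
    (A : ℝ → E →L[ℝ] E) (T : ℝ → ℝ → E →L[ℝ] E) : Prop :=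
  (∀ s : ℝ, T s s = ContinuousLinearMap.id ℝ E) ∧
  (∀ t r s : ℝ, (T t r).comp (T r s) = T t s) ∧
  (∀ (s : ℝ) (x : E) (t : ℝ), HasDerivAt (fun r => T r s x) (A t (T t s x)) t)

/-- `(K e^{ε s}, γ)`-nonuniform exponential dichotomy on `[0,∞)` with projections `P`. -/
def NonuniformED {E : Type*} [NormedAddCommGroup E] [NormedSpace ℝ E]
    (T : ℝ → ℝ → E →L[ℝ] E) (P : ℝ → E →L[ℝ] E) (K ε γ : ℝ) : Prop :=
  1 ≤ K ∧ 0 ≤ ε ∧ ε < γ ∧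
  (∀ t : ℝ, 0 ≤ t → (P t).comp (P t) = P t) ∧
  (∀ t s : ℝ, 0 ≤ t → 0 ≤ s → (T t s).comp (P s) = (P t).comp (T t s)) ∧
  (∀ s t : ℝ, 0 ≤ s → s ≤ t →
    ‖(T t s).comp (P s)‖ ≤ K * Real.exp (-γ * (t - s)) * Real.exp (ε * s)) ∧
  (∀ t s : ℝ, 0 ≤ t → t ≤ s →
    ‖(T t s).comp (ContinuousLinearMap.id ℝ E - P s)‖ ≤ K * Real.exp (-γ * (s - t)) * Real.exp (ε * s))

/-- Nonuniform exponential contraction: dichotomy with `P = I`. -/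
def NonuniformContraction {E : Type*} [NormedAddCommGroup E] [NormedSpace ℝ E]
    (T : ℝ → ℝ → E →L[ℝ] E) (K ε γ : ℝ) : Prop :=
  NonuniformED T (fun _ => ContinuousLinearMap.id ℝ E) K ε γ

/-- Half `(M e^{δ s}, ν)`-nonuniform bounded growth on `[0,∞)`. -/
def HalfNBG {E : Type*} [NormedAddCommGroup E] [NormedSpace ℝ E]
    (T : ℝ → ℝ → E →L[ℝ] E) (M δ ν : ℝ) : Prop :=
  1 ≤ M ∧ 0 ≤ δ ∧ 0 < ν ∧
  ∀ s t : ℝ, 0 ≤ s → s ≤ t → ‖T t s‖ ≤ M * Real.exp (ν * (t - s)) * Real.exp (δ * s)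

/-- Nonuniform exponential dichotomy spectrum of the system with evolution operator `T`. -/
def NonuniformSpectrum {E : Type*} [NormedAddCommGroup E] [NormedSpace ℝ E]
    (T : ℝ → ℝ → E →L[ℝ] E) : Set ℝ :=
  {l : ℝ | ¬ ∃ P K ε γ, NonuniformED (fun t s => Real.exp (-l * (t - s)) • T t s) P K ε γ}

/-- Piecewise continuity: on each compact interval, continuity off a finite set. -/
def PiecewiseContinuous {E : Type*} [TopologicalSpace E] (ω : ℝ → E) : Prop :=
  ∀ a b : ℝ, ∃ s : Finset ℝ, ContinuousOn ω (Set.Icc a b \ ↑s)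

/-- Global nonuniform asymptotic stability of the trivial solution of `x' = g(t,x)`. -/
def GloballyNonuniformlyAsymptoticallyStable {E : Type*} [NormedAddCommGroup E]
    [NormedSpace ℝ E] (g : ℝ → E → E) : Prop :=
  (∀ t₀ : ℝ, 0 ≤ t₀ → ∀ η > (0:ℝ), ∃ δ > (0:ℝ), ∀ x : ℝ → E,
    (∀ t, t₀ ≤ t → HasDerivAt x (g t (x t)) t) → ‖x t₀‖ < δ →
      ∀ t, t₀ ≤ t → ‖x t‖ < η) ∧
  (∀ t₀ : ℝ, 0 ≤ t₀ → ∀ x : ℝ → E,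
    (∀ t, t₀ ≤ t → HasDerivAt x (g t (x t)) t) → Tendsto x atTop (nhds 0))

/-- Operator norm with parametrized norm `ND s` on the domain and `NC t` on the codomain. -/
def pNorm {V W : Type*} [NormedAddCommGroup V] [NormedSpace ℝ V]
    [NormedAddCommGroup W] [NormedSpace ℝ W]
    (ND : ℝ → V → ℝ) (NC : ℝ → W → ℝ) (s t : ℝ) (U : V →L[ℝ] W) : ℝ :=
  sSup {r : ℝ | ∃ x : V, x ≠ 0 ∧ r = NC t (U x) / ND s x}

/-- `N t` is a norm for each `t` (triangle inequality and absolute homogeneity). -/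
def IsNormFamily {V : Type*} [NormedAddCommGroup V] [NormedSpace ℝ V]
    (N : ℝ → V → ℝ) : Prop :=
  (∀ t x y, N t (x + y) ≤ N t x + N t y) ∧ ∀ (t : ℝ) (c : ℝ) (x : V), N t (c • x) = |c| * N t x

/-- The block upper triangular operator `[[A, C], [0, B]]` on `E × F`. -/
def blockUpper {E F : Type*} [NormedAddCommGroup E] [NormedSpace ℝ E]
    [NormedAddCommGroup F] [NormedSpace ℝ F]
    (A : E →L[ℝ] E) (B : F →L[ℝ] F) (C : F →L[ℝ] E) : (E × F) →L[ℝ] (E × F) :=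
  ((A.comp (ContinuousLinearMap.fst ℝ E F)) + (C.comp (ContinuousLinearMap.snd ℝ E F))).prod
    (B.comp (ContinuousLinearMap.snd ℝ E F))

/-- Evolution operator of the scalar equation `x' = a(t) x`. -/
def scalarEvol (a : ℝ → ℝ) (t s : ℝ) : ℝ →L[ℝ] ℝ :=
  Real.exp (∫ τ in s..t, a τ) • (1 : ℝ →L[ℝ] ℝ)


/-- `‖C‖_{τ,∞} = sup_{τ ≥ 0} ‖C(τ)‖_{τ,τ}`. -/
def CSupNorm {E F : Type*} [NormedAddCommGroup E] [NormedSpace ℝ E]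
    [NormedAddCommGroup F] [NormedSpace ℝ F]
    (NB : ℝ → F → ℝ) (NA : ℝ → E → ℝ) (C : ℝ → F →L[ℝ] E) : ℝ :=
  sSup ((fun τ => pNorm NB NA τ τ (C τ)) '' Set.Ici (0 : ℝ))

/-- The operator
`R(t) = −∫_t^∞ X(t,τ)(I−P^A(τ))C(τ)P^B(τ)Y(τ,t)dτ − ∫_0^t X(t,τ)P^A(τ)C(τ)(I−P^B(τ))Y(τ,t)dτ`. -/
def Rop {E F : Type*} [NormedAddCommGroup E] [NormedSpace ℝ E]
    [NormedAddCommGroup F] [NormedSpace ℝ F]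
    (X : ℝ → ℝ → E →L[ℝ] E) (Y : ℝ → ℝ → F →L[ℝ] F) (C : ℝ → F →L[ℝ] E)
    (PA : ℝ → E →L[ℝ] E) (PB : ℝ → F →L[ℝ] F) (t : ℝ) : F →L[ℝ] E :=
  -(∫ τ in Set.Ioi t, ((X t τ).comp (ContinuousLinearMap.id ℝ E - PA τ)).comp
      ((C τ).comp ((PB τ).comp (Y τ t)))) -
  ∫ τ in (0:ℝ)..t, ((X t τ).comp (PA τ)).comp
      ((C τ).comp ((ContinuousLinearMap.id ℝ F - PB τ).comp (Y τ t)))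

section AuxLemmas

variable {V W : Type*} [NormedAddCommGroup V] [NormedSpace ℝ V]
  [NormedAddCommGroup W] [NormedSpace ℝ W]

lemma pNorm_nonneg_aux (ND : ℝ → V → ℝ) (NC : ℝ → W → ℝ) (s t : ℝ) (U : V →L[ℝ] W)
    (hD : ∀ x : V, 0 ≤ ND s x) (hC : ∀ w : W, 0 ≤ NC t w) :
    0 ≤ pNorm ND NC s t U := by
  unfold pNorm
  apply Real.sSup_nonneg
  rintro r ⟨x, hx, rfl⟩
  exact div_nonneg (hC _) (hD _)

lemma apply_le_pNorm (ND : ℝ → V → ℝ) (NC : ℝ → W → ℝ) (s t : ℝ) (U : V →L[ℝ] W)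
    {L₁ M : ℝ} (hL₁ : 0 < L₁) (hM : 0 ≤ M)
    (hlowD : ∀ x : V, L₁ * ‖x‖ ≤ ND s x)
    (hlowC : ∀ w : W, 0 ≤ NC t w)
    (hup : ∀ w : W, NC t w ≤ M * ‖w‖)
    (hzC : NC t 0 = 0) (x : V) :
    NC t (U x) ≤ pNorm ND NC s t U * ND s x := by
  have hDnn : ∀ z : V, 0 ≤ ND s z := fun z => le_trans (by positivity) (hlowD z)
  have hnn : 0 ≤ pNorm ND NC s t U := pNorm_nonneg_aux _ _ _ _ _ hDnn hlowC
  have hbdd : BddAbove {r : ℝ | ∃ x : V, x ≠ 0 ∧ r = NC t (U x) / ND s x} := by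
    refine ⟨M * ‖U‖ / L₁, ?_⟩
    rintro r ⟨z, hz, rfl⟩
    have hzpos : 0 < ‖z‖ := norm_pos_iff.mpr hz
    have hDpos : 0 < ND s z := lt_of_lt_of_le (by positivity) (hlowD z)
    rw [div_le_iff₀ hDpos]
    calc NC t (U z) ≤ M * ‖U z‖ := hup _
      _ ≤ M * (‖U‖ * ‖z‖) := by
          have h := U.le_opNorm z
          nlinarith [norm_nonneg (U z)]
      _ = M * ‖U‖ / L₁ * (L₁ * ‖z‖) := by field_simp
      _ ≤ M * ‖U‖ / L₁ * ND s z :=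
          mul_le_mul_of_nonneg_left (hlowD z) (by positivity)
  by_cases hx : x = 0
  · subst hx
    rw [map_zero, hzC]
    exact mul_nonneg hnn (hDnn 0)
  · have hDpos : 0 < ND s x :=
      lt_of_lt_of_le (mul_pos hL₁ (norm_pos_iff.mpr hx)) (hlowD x)
    have hmem : NC t (U x) / ND s x ∈
        {r : ℝ | ∃ z : V, z ≠ 0 ∧ r = NC t (U z) / ND s z} := ⟨x, hx, rfl⟩
    have hle := le_csSup hbdd hmem
    unfold pNorm
    exact (div_le_iff₀ hDpos).mp hle

end AuxLemmas

set_option maxHeartbeats 1000000 in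
/-- the linking block `R(t)` satisfies
`‖R(t)‖ ≤ (2κκ̃/(α+α̃)) L e^{θt} ‖C‖_{τ,∞}` for all `t ≥ 0`. -/
theorem Rop_estimate {n m : ℕ}
    (A : ℝ → EuclideanSpace ℝ (Fin n) →L[ℝ] EuclideanSpace ℝ (Fin n))
    (B : ℝ → EuclideanSpace ℝ (Fin m) →L[ℝ] EuclideanSpace ℝ (Fin m))
    (C : ℝ → EuclideanSpace ℝ (Fin m) →L[ℝ] EuclideanSpace ℝ (Fin n))
    (X : ℝ → ℝ → EuclideanSpace ℝ (Fin n) →L[ℝ] EuclideanSpace ℝ (Fin n))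
    (Y : ℝ → ℝ → EuclideanSpace ℝ (Fin m) →L[ℝ] EuclideanSpace ℝ (Fin m))
    (hX : IsEvolution A X) (hY : IsEvolution B Y)
    (PA : ℝ → EuclideanSpace ℝ (Fin n) →L[ℝ] EuclideanSpace ℝ (Fin n))
    (PB : ℝ → EuclideanSpace ℝ (Fin m) →L[ℝ] EuclideanSpace ℝ (Fin m))
    (hPA : ∀ t : ℝ, 0 ≤ t → (PA t).comp (PA t) = PA t)
    (hPB : ∀ t : ℝ, 0 ≤ t → (PB t).comp (PB t) = PB t)
    (hPAinv : ∀ t s : ℝ, 0 ≤ t → 0 ≤ s → (X t s).comp (PA s) = (PA t).comp (X t s))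
    (hPBinv : ∀ t s : ℝ, 0 ≤ t → 0 ≤ s → (Y t s).comp (PB s) = (PB t).comp (Y t s))
    (NA : ℝ → EuclideanSpace ℝ (Fin n) → ℝ) (NB : ℝ → EuclideanSpace ℝ (Fin m) → ℝ)
    (hNAfam : IsNormFamily NA) (hNBfam : IsNormFamily NB)
    (L₁ L₂ θ : ℝ) (hL₁ : 0 < L₁) (hL₂ : 1 ≤ L₂) (hθ : 0 ≤ θ)
    (hsandA : ∀ (t : ℝ) (x : EuclideanSpace ℝ (Fin n)), 0 ≤ t →
      L₁ * ‖x‖ ≤ NA t x ∧ NA t x ≤ L₂ * Real.exp (θ * t) * ‖x‖)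
    (hsandB : ∀ (t : ℝ) (y : EuclideanSpace ℝ (Fin m)), 0 ≤ t →
      L₁ * ‖y‖ ≤ NB t y ∧ NB t y ≤ L₂ * Real.exp (θ * t) * ‖y‖)
    (κ κ' α α' : ℝ) (hα : 0 < α) (hα' : 0 < α')
    (hPX1 : ∀ s t : ℝ, 0 ≤ s → s ≤ t →
      pNorm NA NA s t ((X t s).comp (PA s)) ≤ κ * Real.exp (-α * (t - s)))
    (hPX2 : ∀ t s : ℝ, 0 ≤ t → t ≤ s →
      pNorm NA NA s t ((X t s).comp (ContinuousLinearMap.id ℝ _ - PA s)) ≤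
        κ * Real.exp (-α * (s - t)))
    (hPY1 : ∀ s t : ℝ, 0 ≤ s → s ≤ t →
      pNorm NB NB s t ((Y t s).comp (PB s)) ≤ κ' * Real.exp (-α' * (t - s)))
    (hPY2 : ∀ t s : ℝ, 0 ≤ t → t ≤ s →
      pNorm NB NB s t ((Y t s).comp (ContinuousLinearMap.id ℝ _ - PB s)) ≤
        κ' * Real.exp (-α' * (s - t)))
    (hCbdd : BddAbove ((fun τ => pNorm NB NA τ τ (C τ)) '' Set.Ici (0 : ℝ)))
    -- convergence of the improper integral and interval integrability
    (hint1 : ∀ t : ℝ, 0 ≤ t → MeasureTheory.IntegrableOn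
      (fun τ => (((X t τ).comp (ContinuousLinearMap.id ℝ _ - PA τ)).comp
        ((C τ).comp ((PB τ).comp (Y τ t))) :
          EuclideanSpace ℝ (Fin m) →L[ℝ] EuclideanSpace ℝ (Fin n))) (Set.Ioi t) MeasureTheory.volume)
    (hint2 : ∀ t : ℝ, 0 ≤ t → IntervalIntegrable
      (fun τ => ((X t τ).comp (PA τ)).comp
        ((C τ).comp ((ContinuousLinearMap.id ℝ _ - PB τ).comp (Y τ t))))
      MeasureTheory.volume 0 t) :
    ∀ t : ℝ, 0 ≤ t →
      ‖Rop X Y C PA PB t‖ ≤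
        2 * κ * κ' / (α + α') * (L₂ / L₁) * Real.exp (θ * t) * CSupNorm NB NA C := by
  intro t ht
  obtain ⟨hNAadd, hNAsmul⟩ := hNAfam
  obtain ⟨hNBadd, hNBsmul⟩ := hNBfam
  have hNA0 : ∀ r : ℝ, NA r 0 = 0 := fun r => by
    have h := hNAsmul r 0 0; simpa using h
  have hNB0 : ∀ r : ℝ, NB r 0 = 0 := fun r => by
    have h := hNBsmul r 0 0; simpa using h
  have hL₂pos : (0:ℝ) < L₂ := lt_of_lt_of_le one_pos hL₂
  have hM : ∀ r : ℝ, (0:ℝ) ≤ L₂ * Real.exp (θ * r) := fun r => by positivity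
  have hNAnn : ∀ r : ℝ, 0 ≤ r → ∀ x, 0 ≤ NA r x := fun r hr x =>
    le_trans (by positivity) ((hsandA r x hr).1)
  have hNBnn : ∀ r : ℝ, 0 ≤ r → ∀ x, 0 ≤ NB r x := fun r hr x =>
    le_trans (by positivity) ((hsandB r x hr).1)
  have hκ : 0 ≤ κ := by
    have h := hPX1 0 0 le_rfl le_rfl
    have h2 : 0 ≤ pNorm NA NA 0 0 ((X 0 0).comp (PA 0)) :=
      pNorm_nonneg_aux _ _ _ _ _ (fun x => hNAnn 0 le_rfl x) (fun w => hNAnn 0 le_rfl w)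
    have := le_trans h2 h
    simpa using this
  have hκ' : 0 ≤ κ' := by
    have h := hPY1 0 0 le_rfl le_rfl
    have h2 : 0 ≤ pNorm NB NB 0 0 ((Y 0 0).comp (PB 0)) :=
      pNorm_nonneg_aux _ _ _ _ _ (fun x => hNBnn 0 le_rfl x) (fun w => hNBnn 0 le_rfl w)
    have := le_trans h2 h
    simpa using this
  have hKc : 0 ≤ CSupNorm NB NA C := by
    unfold CSupNorm
    apply Real.sSup_nonneg
    rintro r ⟨τ, hτ, rfl⟩
    exact pNorm_nonneg_aux _ _ _ _ _ (fun y => hNBnn τ hτ y) (fun w => hNAnn τ hτ w)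
  have hcpos : (0:ℝ) < α + α' := by linarith
  have hCle : ∀ τ : ℝ, 0 ≤ τ → ∀ w, NA τ (C τ w) ≤ CSupNorm NB NA C * NB τ w := by
    intro τ hτ w
    have h1 := apply_le_pNorm NB NA τ τ (C τ) hL₁ (hM τ) (fun y => (hsandB τ y hτ).1)
      (fun z => hNAnn τ hτ z) (fun z => (hsandA τ z hτ).2) (hNA0 τ) w
    have h2 : pNorm NB NA τ τ (C τ) ≤ CSupNorm NB NA C := le_csSup hCbdd ⟨τ, hτ, rfl⟩
    exact le_trans h1 (mul_le_mul_of_nonneg_right h2 (hNBnn τ hτ w))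
  set Kc := CSupNorm NB NA C with hKcdef
  set D := κ * κ' * (L₂ / L₁) * Real.exp (θ * t) * Kc with hD
  have hDnn : 0 ≤ D := by rw [hD]; positivity
  -- pointwise bound on the first integrand
  have key1 : ∀ τ : ℝ, t ≤ τ →
      ‖((X t τ).comp (ContinuousLinearMap.id ℝ (EuclideanSpace ℝ (Fin n)) - PA τ)).comp
        ((C τ).comp ((PB τ).comp (Y τ t)))‖ ≤ D * Real.exp (-(α + α') * (τ - t)) := by
    intro τ hτ
    have hτ0 : 0 ≤ τ := le_trans ht hτ
    apply ContinuousLinearMap.opNorm_le_bound _ (by positivity)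
    intro y
    have hcomm : (Y τ t).comp (PB t) = (PB τ).comp (Y τ t) := hPBinv τ t hτ0 ht
    have happ : PB τ (Y τ t y) = ((Y τ t).comp (PB t)) y := by
      have h := congrArg (fun U : EuclideanSpace ℝ (Fin m) →L[ℝ] EuclideanSpace ℝ (Fin m) => U y) hcomm
      simpa using h.symm
    have s1 := apply_le_pNorm NA NA τ t ((X t τ).comp (ContinuousLinearMap.id ℝ (EuclideanSpace ℝ (Fin n)) - PA τ))
      hL₁ (hM t) (fun x => (hsandA τ x hτ0).1) (fun w => hNAnn t ht w)
      (fun w => (hsandA t w ht).2) (hNA0 t) (C τ (PB τ (Y τ t y)))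
    have s1' : NA t (((X t τ).comp (ContinuousLinearMap.id ℝ (EuclideanSpace ℝ (Fin n)) - PA τ)) (C τ (PB τ (Y τ t y)))) ≤
        κ * Real.exp (-α * (τ - t)) * NA τ (C τ (PB τ (Y τ t y))) :=
      le_trans s1 (mul_le_mul_of_nonneg_right (hPX2 t τ ht hτ) (hNAnn τ hτ0 _))
    have s2 := hCle τ hτ0 (PB τ (Y τ t y))
    have s3pre := apply_le_pNorm NB NB t τ ((Y τ t).comp (PB t)) hL₁ (hM τ)
      (fun x => (hsandB t x ht).1) (fun w => hNBnn τ hτ0 w)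
      (fun w => (hsandB τ w hτ0).2) (hNB0 τ) y
    have s3 : NB τ (PB τ (Y τ t y)) ≤ κ' * Real.exp (-α' * (τ - t)) * NB t y := by
      rw [happ]
      exact le_trans s3pre (mul_le_mul_of_nonneg_right (hPY1 t τ ht hτ) (hNBnn t ht y))
    have s4 : NB t y ≤ L₂ * Real.exp (θ * t) * ‖y‖ := (hsandB t y ht).2
    have s5 : L₁ * ‖(((X t τ).comp (ContinuousLinearMap.id ℝ (EuclideanSpace ℝ (Fin n)) - PA τ)).comp
        ((C τ).comp ((PB τ).comp (Y τ t)))) y‖ ≤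
        NA t (((X t τ).comp (ContinuousLinearMap.id ℝ (EuclideanSpace ℝ (Fin n)) - PA τ)) (C τ (PB τ (Y τ t y)))) :=
      (hsandA t _ ht).1
    have chain : NA t (((X t τ).comp (ContinuousLinearMap.id ℝ (EuclideanSpace ℝ (Fin n)) - PA τ)) (C τ (PB τ (Y τ t y)))) ≤
        κ * Real.exp (-α * (τ - t)) *
          (Kc * (κ' * Real.exp (-α' * (τ - t)) * (L₂ * Real.exp (θ * t) * ‖y‖))) := by
      refine le_trans s1' ?_
      refine mul_le_mul_of_nonneg_left ?_ (by positivity)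
      refine le_trans s2 ?_
      refine mul_le_mul_of_nonneg_left ?_ hKc
      refine le_trans s3 ?_
      exact mul_le_mul_of_nonneg_left s4 (by positivity)
    have hfin := le_trans s5 chain
    have hexp : Real.exp (-α * (τ - t)) * Real.exp (-α' * (τ - t)) =
        Real.exp (-(α + α') * (τ - t)) := by
      rw [← Real.exp_add]; congr 1; ring
    have hdiv : ‖(((X t τ).comp (ContinuousLinearMap.id ℝ (EuclideanSpace ℝ (Fin n)) - PA τ)).comp
        ((C τ).comp ((PB τ).comp (Y τ t)))) y‖ ≤
        κ * Real.exp (-α * (τ - t)) *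
          (Kc * (κ' * Real.exp (-α' * (τ - t)) * (L₂ * Real.exp (θ * t) * ‖y‖))) / L₁ := by
      rw [le_div_iff₀ hL₁]; linarith
    refine le_trans hdiv (le_of_eq ?_)
    rw [hD, ← hexp]
    field_simp
  -- pointwise bound on the second integrand
  have key2 : ∀ τ : ℝ, 0 ≤ τ → τ ≤ t →
      ‖((X t τ).comp (PA τ)).comp
        ((C τ).comp ((ContinuousLinearMap.id ℝ (EuclideanSpace ℝ (Fin m)) - PB τ).comp (Y τ t)))‖ ≤
        D * Real.exp (-(α + α') * (t - τ)) := by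
    intro τ hτ0 hτ
    apply ContinuousLinearMap.opNorm_le_bound _ (by positivity)
    intro y
    have hYB : (ContinuousLinearMap.id ℝ (EuclideanSpace ℝ (Fin m)) - PB τ).comp (Y τ t) =
        (Y τ t).comp (ContinuousLinearMap.id ℝ (EuclideanSpace ℝ (Fin m)) - PB t) := by
      rw [ContinuousLinearMap.sub_comp, ContinuousLinearMap.comp_sub,
        ContinuousLinearMap.id_comp, ContinuousLinearMap.comp_id, hPBinv τ t hτ0 ht]
    have happ : (ContinuousLinearMap.id ℝ (EuclideanSpace ℝ (Fin m)) - PB τ) (Y τ t y) =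
        ((Y τ t).comp (ContinuousLinearMap.id ℝ (EuclideanSpace ℝ (Fin m)) - PB t)) y := by
      have h := congrArg (fun U : EuclideanSpace ℝ (Fin m) →L[ℝ] EuclideanSpace ℝ (Fin m) => U y) hYB
      simpa using h
    have s1 := apply_le_pNorm NA NA τ t ((X t τ).comp (PA τ))
      hL₁ (hM t) (fun x => (hsandA τ x hτ0).1) (fun w => hNAnn t ht w)
      (fun w => (hsandA t w ht).2) (hNA0 t) (C τ ((ContinuousLinearMap.id ℝ (EuclideanSpace ℝ (Fin m)) - PB τ) (Y τ t y)))
    have s1' : NA t (((X t τ).comp (PA τ))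
        (C τ ((ContinuousLinearMap.id ℝ (EuclideanSpace ℝ (Fin m)) - PB τ) (Y τ t y)))) ≤
        κ * Real.exp (-α * (t - τ)) *
          NA τ (C τ ((ContinuousLinearMap.id ℝ (EuclideanSpace ℝ (Fin m)) - PB τ) (Y τ t y))) :=
      le_trans s1 (mul_le_mul_of_nonneg_right (hPX1 τ t hτ0 hτ) (hNAnn τ hτ0 _))
    have s2 := hCle τ hτ0 ((ContinuousLinearMap.id ℝ (EuclideanSpace ℝ (Fin m)) - PB τ) (Y τ t y))
    have s3pre := apply_le_pNorm NB NB t τ ((Y τ t).comp (ContinuousLinearMap.id ℝ (EuclideanSpace ℝ (Fin m)) - PB t))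
      hL₁ (hM τ) (fun x => (hsandB t x ht).1) (fun w => hNBnn τ hτ0 w)
      (fun w => (hsandB τ w hτ0).2) (hNB0 τ) y
    have s3 : NB τ ((ContinuousLinearMap.id ℝ (EuclideanSpace ℝ (Fin m)) - PB τ) (Y τ t y)) ≤
        κ' * Real.exp (-α' * (t - τ)) * NB t y := by
      rw [happ]
      exact le_trans s3pre (mul_le_mul_of_nonneg_right (hPY2 τ t hτ0 hτ) (hNBnn t ht y))
    have s4 : NB t y ≤ L₂ * Real.exp (θ * t) * ‖y‖ := (hsandB t y ht).2
    have s5 : L₁ * ‖(((X t τ).comp (PA τ)).comp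
        ((C τ).comp ((ContinuousLinearMap.id ℝ (EuclideanSpace ℝ (Fin m)) - PB τ).comp (Y τ t)))) y‖ ≤
        NA t (((X t τ).comp (PA τ))
          (C τ ((ContinuousLinearMap.id ℝ (EuclideanSpace ℝ (Fin m)) - PB τ) (Y τ t y)))) :=
      (hsandA t _ ht).1
    have chain : NA t (((X t τ).comp (PA τ))
        (C τ ((ContinuousLinearMap.id ℝ (EuclideanSpace ℝ (Fin m)) - PB τ) (Y τ t y)))) ≤
        κ * Real.exp (-α * (t - τ)) *
          (Kc * (κ' * Real.exp (-α' * (t - τ)) * (L₂ * Real.exp (θ * t) * ‖y‖))) := by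
      refine le_trans s1' ?_
      refine mul_le_mul_of_nonneg_left ?_ (by positivity)
      refine le_trans s2 ?_
      refine mul_le_mul_of_nonneg_left ?_ hKc
      refine le_trans s3 ?_
      exact mul_le_mul_of_nonneg_left s4 (by positivity)
    have hfin := le_trans s5 chain
    have hexp : Real.exp (-α * (t - τ)) * Real.exp (-α' * (t - τ)) =
        Real.exp (-(α + α') * (t - τ)) := by
      rw [← Real.exp_add]; congr 1; ring
    have hdiv : ‖(((X t τ).comp (PA τ)).comp
        ((C τ).comp ((ContinuousLinearMap.id ℝ (EuclideanSpace ℝ (Fin m)) - PB τ).comp (Y τ t)))) y‖ ≤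
        κ * Real.exp (-α * (t - τ)) *
          (Kc * (κ' * Real.exp (-α' * (t - τ)) * (L₂ * Real.exp (θ * t) * ‖y‖))) / L₁ := by
      rw [le_div_iff₀ hL₁]; linarith
    refine le_trans hdiv (le_of_eq ?_)
    rw [hD, ← hexp]
    field_simp
  -- integral computations
  have hexpint : IntegrableOn (fun τ => Real.exp (-(α + α') * (τ - t))) (Set.Ioi t) volume := by
    have h0 := (exp_neg_integrableOn_Ioi t hcpos).const_mul (Real.exp ((α + α') * t))
    refine MeasureTheory.IntegrableOn.congr_fun h0 (fun τ _ => ?_) measurableSet_Ioi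
    rw [← Real.exp_add]; congr 1; ring
  have hIval : ∫ τ in Set.Ioi t, Real.exp (-(α + α') * (τ - t)) = 1 / (α + α') := by
    have hderiv : ∀ x ∈ Set.Ici t, HasDerivAt
        (fun τ => -Real.exp (-(α + α') * (τ - t)) / (α + α'))
        (Real.exp (-(α + α') * (x - t))) x := by
      intro x _
      have h1 : HasDerivAt (fun τ : ℝ => -(α + α') * (τ - t)) (-(α + α')) x := by
        simpa using ((hasDerivAt_id x).sub_const t).const_mul (-(α + α'))
      have h2 := (h1.exp.neg).div_const (α + α')
      refine h2.congr_deriv (Eq.symm ?_)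
      rw [eq_div_iff (ne_of_gt hcpos)]; try ring
    have htend : Tendsto (fun τ => -Real.exp (-(α + α') * (τ - t)) / (α + α'))
        atTop (nhds 0) := by
      have h1 : Tendsto (fun τ : ℝ => -(α + α') * (τ - t)) atTop atBot := by
        apply Filter.Tendsto.const_mul_atTop_of_neg (by linarith)
        simpa [sub_eq_add_neg] using tendsto_atTop_add_const_right atTop (-t) tendsto_id
      have h2 := Real.tendsto_exp_atBot.comp h1
      have h3 := (h2.div_const (α + α')).neg
      simpa [neg_div] using h3
    have h := integral_Ioi_of_hasDerivAt_of_tendsto' hderiv hexpint htend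
    rw [h]
    simp only [sub_self, mul_zero, Real.exp_zero]
    ring
  have hI1 : ‖∫ τ in Set.Ioi t, ((X t τ).comp (ContinuousLinearMap.id ℝ (EuclideanSpace ℝ (Fin n)) - PA τ)).comp
      ((C τ).comp ((PB τ).comp (Y τ t)))‖ ≤ D / (α + α') := by
    calc ‖∫ τ in Set.Ioi t, ((X t τ).comp (ContinuousLinearMap.id ℝ (EuclideanSpace ℝ (Fin n)) - PA τ)).comp
          ((C τ).comp ((PB τ).comp (Y τ t)))‖
        ≤ ∫ τ in Set.Ioi t, ‖((X t τ).comp (ContinuousLinearMap.id ℝ (EuclideanSpace ℝ (Fin n)) - PA τ)).comp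
          ((C τ).comp ((PB τ).comp (Y τ t)))‖ := norm_integral_le_integral_norm _
      _ ≤ ∫ τ in Set.Ioi t, D * Real.exp (-(α + α') * (τ - t)) :=
          setIntegral_mono_on (hint1 t ht).norm (hexpint.const_mul D) measurableSet_Ioi
            (fun τ hτ => key1 τ (le_of_lt hτ))
      _ = D * (1 / (α + α')) := by rw [integral_const_mul, hIval]
      _ = D / (α + α') := by ring
  have hcont : Continuous (fun τ : ℝ => Real.exp (-(α + α') * (t - τ))) := by
    fun_prop
  have hIval2 : ∫ τ in (0:ℝ)..t, Real.exp (-(α + α') * (t - τ)) =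
      1 / (α + α') - Real.exp (-(α + α') * t) / (α + α') := by
    have hderiv2 : ∀ x ∈ Set.uIcc (0:ℝ) t, HasDerivAt
        (fun τ => Real.exp (-(α + α') * (t - τ)) / (α + α'))
        (Real.exp (-(α + α') * (t - x))) x := by
      intro x _
      have h1 : HasDerivAt (fun τ : ℝ => -(α + α') * (t - τ)) (α + α') x := by
        have h := ((hasDerivAt_id x).const_sub t).const_mul (-(α + α'))
        refine h.congr_deriv (Eq.symm ?_)
        ring
      have h2 := h1.exp.div_const (α + α')
      refine h2.congr_deriv (Eq.symm ?_)
      rw [eq_div_iff (ne_of_gt hcpos)]; try ring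
    rw [intervalIntegral.integral_eq_sub_of_hasDerivAt hderiv2 (hcont.intervalIntegrable 0 t)]
    simp only [sub_self, mul_zero, Real.exp_zero, sub_zero]
  have hI2 : ‖∫ τ in (0:ℝ)..t, ((X t τ).comp (PA τ)).comp
      ((C τ).comp ((ContinuousLinearMap.id ℝ (EuclideanSpace ℝ (Fin m)) - PB τ).comp (Y τ t)))‖ ≤ D / (α + α') := by
    calc ‖∫ τ in (0:ℝ)..t, ((X t τ).comp (PA τ)).comp
          ((C τ).comp ((ContinuousLinearMap.id ℝ (EuclideanSpace ℝ (Fin m)) - PB τ).comp (Y τ t)))‖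
        ≤ ∫ τ in (0:ℝ)..t, ‖((X t τ).comp (PA τ)).comp
          ((C τ).comp ((ContinuousLinearMap.id ℝ (EuclideanSpace ℝ (Fin m)) - PB τ).comp (Y τ t)))‖ :=
          intervalIntegral.norm_integral_le_integral_norm ht
      _ ≤ ∫ τ in (0:ℝ)..t, D * Real.exp (-(α + α') * (t - τ)) :=
          intervalIntegral.integral_mono_on ht (hint2 t ht).norm
            ((continuous_const.mul hcont).intervalIntegrable 0 t)
            (fun τ hτ => key2 τ hτ.1 hτ.2)
      _ = D * ∫ τ in (0:ℝ)..t, Real.exp (-(α + α') * (t - τ)) := by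
          rw [intervalIntegral.integral_const_mul]
      _ ≤ D / (α + α') := by
          rw [hIval2]
          have he : 0 < Real.exp (-(α + α') * t) / (α + α') :=
            div_pos (Real.exp_pos _) hcpos
          have hle : 1 / (α + α') - Real.exp (-(α + α') * t) / (α + α') ≤ 1 / (α + α') := by
            linarith
          calc D * (1 / (α + α') - Real.exp (-(α + α') * t) / (α + α')) ≤ D * (1 / (α + α')) :=
                mul_le_mul_of_nonneg_left hle hDnn
            _ = D / (α + α') := by ring
  have hsplit : ‖Rop X Y C PA PB t‖ ≤
      ‖∫ τ in Set.Ioi t, ((X t τ).comp (ContinuousLinearMap.id ℝ (EuclideanSpace ℝ (Fin n)) - PA τ)).comp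
        ((C τ).comp ((PB τ).comp (Y τ t)))‖ +
      ‖∫ τ in (0:ℝ)..t, ((X t τ).comp (PA τ)).comp
        ((C τ).comp ((ContinuousLinearMap.id ℝ (EuclideanSpace ℝ (Fin m)) - PB τ).comp (Y τ t)))‖ := by
    unfold Rop
    refine le_trans (norm_sub_le _ _) ?_
    rw [norm_neg]
  refine le_trans hsplit (le_trans (add_le_add hI1 hI2) (le_of_eq ?_))
  rw [hD]
  field_simp
  ring

end
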